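/- arXiv:1304.4773 — 4 statements merged into one kernel-verified Lean document; each statement's English description precedes it below -/
import Mathlib

section
/- Let ρ: ℝ → ℝ be a convex and symmetric loss function with ρ(0) = 0 and ρ(x) > 0 for x ≠ 0. Fix a penalty parameter λ > 0 and a subset size h with 1 ≤ h ≤ n. Consider the regression estimator β̂(Z) defined for a sample Z = (X, y) with X ∈ ℝ^{n×p}, y ∈ ℝ^n, as a minimizer over β ∈ ℝ^p of Q_Z(β) = Σ_{i=1}^{h} (ρ(y − Xβ))_{i:n} + h λ Σ_{j=1}^{p} |β_j|, where (ρ(y − Xβ))_{1:n} ≤ ⋯ ≤ (ρ(y − Xβ))_{n:n} denote the order statistics of the losses ρ(y_i − x_i'β). Then for every sample Z, the replacement finite-sample breakdown point of β̂ equals (n − h + 1)/n. -/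
open Finset

/-- The `i`-th order statistic of the vector `r`, i.e. the `i`-th entry after sorting
the entries of `r` in nondecreasing order. -/
noncomputable def orderStat {n : ℕ} (r : Fin n → ℝ) (i : Fin n) : ℝ :=
  r (Tuple.sort r i)

/-- The sum of the `h` smallest entries (order statistics) of the vector `r`. -/
noncomputable def trimmedSum {n : ℕ} (h : ℕ) (r : Fin n → ℝ) : ℝ :=
  ∑ i ∈ Finset.univ.filter (fun i : Fin n => (i : ℕ) < h), orderStat r i

/-- The L¹ norm of a coefficient vector `β ∈ ℝ^p`. -/
noncomputable def l1norm {p : ℕ} (β : Fin p → ℝ) : ℝ := ∑ j, |β j|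

/-- The Euclidean (L²) norm of a coefficient vector `β ∈ ℝ^p`. -/
noncomputable def euclNorm {p : ℕ} (β : Fin p → ℝ) : ℝ := Real.sqrt (∑ j, β j ^ 2)

/-- `Corrupt m X X' y y'` : the sample `(X', y')` is obtained from the sample `(X, y)` by
replacing (at most) `m` of the `n` observations `(xᵢ', yᵢ)` by arbitrary values. -/
def Corrupt {n p : ℕ} (m : ℕ) (X X' : Fin n → Fin p → ℝ) (y y' : Fin n → ℝ) : Prop :=
  ∃ s : Finset (Fin n), s.card ≤ m ∧ ∀ i ∉ s, (∀ j, X' i j = X i j) ∧ y' i = y i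

/-- The trimmed penalized objective function
`Q_Z(β) = Σ_{i=1}^{h} (ρ(y − Xβ))_{i:n} + h λ Σ_j |β_j|` with loss `ρ`. -/
noncomputable def QGen {n p : ℕ} (ρ : ℝ → ℝ) (lam : ℝ) (h : ℕ)
    (X : Fin n → Fin p → ℝ) (y : Fin n → ℝ) (β : Fin p → ℝ) : ℝ :=
  trimmedSum h (fun i => ρ (y i - ∑ j, X i j * β j)) + (h : ℝ) * lam * l1norm β

/-- `BreaksDown est X y m` : the supremum of `‖est(Z̃)‖₂` over all samples `Z̃` obtained
from `Z = (X, y)` by replacing `m` observations by arbitrary values is infinite. -/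
def BreaksDown {n p : ℕ} (est : (Fin n → Fin p → ℝ) → (Fin n → ℝ) → Fin p → ℝ)
    (X : Fin n → Fin p → ℝ) (y : Fin n → ℝ) (m : ℕ) : Prop :=
  ∀ M : ℝ, ∃ X' y', Corrupt m X X' y y' ∧ M < euclNorm (est X' y')

/-- The replacement finite-sample breakdown point
`ε*(est; Z) = min{ m/n : sup_{Z̃} ‖est(Z̃)‖₂ = ∞ }`. -/
noncomputable def breakdownPoint {n p : ℕ}
    (est : (Fin n → Fin p → ℝ) → (Fin n → ℝ) → Fin p → ℝ)
    (X : Fin n → Fin p → ℝ) (y : Fin n → ℝ) : ℝ :=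
  ((sInf {m : ℕ | BreaksDown est X y m} : ℕ) : ℝ) / n

/-!
If at most `n - h` observations are replaced, `h` original observations survive, so
`Q(0) ≤ ∑ᵢ ρ(yᵢ)` and the penalty `h λ ‖β̂‖₁ ≤ Q(β̂) ≤ Q(0)` keeps `β̂` bounded.

If `n - h + 1` observations are replaced by `(c eⱼ₀, c b)`, every `h`-subset contains one of them.
The point `b eⱼ₀` fits them exactly, so `Q(b eⱼ₀)` has a bound `C` not depending on `c`, while any
`β` with `|b - βⱼ₀| ≥ 1` has a residual of size at least `c` among the `h` smallest, so
`Q(β) ≥ c ρ(1)` by convexity. Choosing `c ρ(1) > C` forces `|β̂ⱼ₀| > b - 1`, with `b` arbitrary.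
-/

theorem Finset.sum_le_sum_of_card_eq_of_forall_le {ι M : Type*} [DecidableEq ι]
    [AddCommMonoid M] [LinearOrder M] [IsOrderedAddMonoid M] {s t : Finset ι} {f : ι → M}
    (hcard : #s = #t) (hf : ∀ a ∈ s, ∀ b ∉ s, f a ≤ f b) :
    ∑ i ∈ s, f i ≤ ∑ i ∈ t, f i := by
  rw [← sum_inter_add_sum_sdiff s t, ← sum_inter_add_sum_sdiff t s, inter_comm t s]
  gcongr _ + ?_
  rcases (s \ t).eq_empty_or_nonempty with hst | hst
  · have hts : t \ s = ∅ := card_eq_zero.1 (by rw [← card_sdiff_comm hcard, hst, card_empty])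
    rw [hst, hts]
  -- Both differences have the same size and are separated by the value of `f` at a maximiser.
  obtain ⟨a, ha, hmax⟩ := exists_max_image _ f hst
  calc ∑ i ∈ s \ t, f i ≤ #(s \ t) • f a := sum_le_card_nsmul _ _ _ hmax
    _ = #(t \ s) • f a := by rw [card_sdiff_comm hcard]
    _ ≤ ∑ i ∈ t \ s, f i :=
      card_nsmul_le_sum _ _ _ fun b hb => hf a (mem_sdiff.1 ha).1 b (mem_sdiff.1 hb).2

section ConvexLoss

variable {E : Type*} [AddCommGroup E] [Module ℝ E] {f : E → ℝ}

theorem ConvexOn.map_smul_le_of_map_zero (hf : ConvexOn ℝ Set.univ f) (h0 : f 0 = 0) (x : E)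
    {t : ℝ} (ht0 : 0 ≤ t) (ht1 : t ≤ 1) : f (t • x) ≤ t * f x := by
  simpa [h0] using
    hf.2 (Set.mem_univ x) (Set.mem_univ 0) ht0 (sub_nonneg.2 ht1) (add_sub_cancel t 1)

theorem ConvexOn.nonneg_of_even (hf : ConvexOn ℝ Set.univ f) (hsym : ∀ x, f (-x) = f x)
    (h0 : f 0 = 0) (x : E) : 0 ≤ f x := by
  have h := hf.2 (Set.mem_univ x) (Set.mem_univ (-x)) (by norm_num : (0 : ℝ) ≤ 1 / 2)
    (by norm_num : (0 : ℝ) ≤ 1 / 2) (by norm_num)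
  rw [smul_neg, add_neg_cancel, h0, hsym, smul_eq_mul] at h
  linarith

theorem ConvexOn.abs_mul_map_one_le {ρ : ℝ → ℝ} (hρ : ConvexOn ℝ Set.univ ρ)
    (hsym : ∀ x, ρ (-x) = ρ x) (h0 : ρ 0 = 0) {x : ℝ} (hx : 1 ≤ |x|) : |x| * ρ 1 ≤ ρ x := by
  have hx0 : 0 < |x| := one_pos.trans_le hx
  have hρx : ρ x = ρ |x| := by rcases abs_choice x with h | h <;> simp [h, hsym]
  have h := hρ.map_smul_le_of_map_zero h0 |x| (inv_nonneg.2 hx0.le) (inv_le_one_of_one_le₀ hx)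
  rw [smul_eq_mul, inv_mul_cancel₀ hx0.ne', ← hρx] at h
  rwa [← le_inv_mul_iff₀ hx0]

end ConvexLoss

section TrimmedSum

variable {n h : ℕ} {r : Fin n → ℝ}

/-- The positions of the `h` smallest entries of `r`. -/
noncomputable def trimmedIndices (h : ℕ) (r : Fin n → ℝ) : Finset (Fin n) :=
  (univ.filter fun i : Fin n => (i : ℕ) < h).map (Tuple.sort r).toEmbedding

theorem sum_trimmedIndices : ∑ i ∈ trimmedIndices h r, r i = trimmedSum h r := by
  rw [trimmedIndices, sum_map]
  rfl

theorem card_trimmedIndices (hh : h ≤ n) : #(trimmedIndices h r) = h := by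
  rw [trimmedIndices, card_map, Fin.card_filter_val_lt, min_eq_right hh]

theorem le_of_mem_trimmedIndices {a b : Fin n} (ha : a ∈ trimmedIndices h r)
    (hb : b ∉ trimmedIndices h r) : r a ≤ r b := by
  obtain ⟨i, hi, rfl⟩ := mem_map.1 ha
  have hj : ¬ ((Tuple.sort r).symm b : ℕ) < h := fun hj =>
    hb (mem_map.2 ⟨_, by simpa using hj, (Tuple.sort r).apply_symm_apply b⟩)
  have hij : i ≤ (Tuple.sort r).symm b := Fin.le_def.2 (by simp at hi; omega)
  simpa using Tuple.monotone_sort r hij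

theorem trimmedSum_le_sum {B : Finset (Fin n)} (hB : #B = h) : trimmedSum h r ≤ ∑ i ∈ B, r i := by
  have hh : h ≤ n := hB ▸ card_le_univ B |>.trans_eq (Fintype.card_fin n)
  rw [← sum_trimmedIndices]
  exact sum_le_sum_of_card_eq_of_forall_le (by rw [card_trimmedIndices hh, hB])
    fun _ ha _ hb => le_of_mem_trimmedIndices ha hb

theorem trimmedSum_nonneg (hr : ∀ i, 0 ≤ r i) : 0 ≤ trimmedSum h r :=
  sum_nonneg fun _ _ => hr _

theorem le_trimmedSum {s : Finset (Fin n)} {L : ℝ} (hr : ∀ i, 0 ≤ r i) (hh : h ≤ n)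
    (hs : #sᶜ < h) (hL : ∀ i ∈ s, L ≤ r i) : L ≤ trimmedSum h r := by
  obtain ⟨a, ha, has⟩ :=
    exists_mem_notMem_of_card_lt_card (hs.trans_eq (card_trimmedIndices hh).symm)
  rw [← sum_trimmedIndices]
  exact (hL a (by simpa using has)).trans (single_le_sum (fun i _ => hr i) ha)

end TrimmedSum

section Estimator

variable {n p h : ℕ} {ρ : ℝ → ℝ} {lam : ℝ}

theorem euclNorm_le_l1norm (β : Fin p → ℝ) : euclNorm β ≤ l1norm β := by
  have hsq : ∑ j, β j ^ 2 ≤ (∑ j, |β j|) ^ 2 := by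
    simpa only [sq_abs] using sum_sq_le_sq_sum_of_nonneg fun j _ => abs_nonneg (β j)
  exact Real.sqrt_le_left (sum_nonneg fun j _ => abs_nonneg (β j)) |>.mpr hsq

theorem abs_le_euclNorm (β : Fin p → ℝ) (j : Fin p) : |β j| ≤ euclNorm β := by
  rw [← Real.sqrt_sq_eq_abs]
  exact Real.sqrt_le_sqrt <|
    single_le_sum (f := fun i => β i ^ 2) (fun i _ => sq_nonneg _) (mem_univ j)

theorem QGen_zero (X : Fin n → Fin p → ℝ) (y : Fin n → ℝ) :
    QGen ρ lam h X y 0 = trimmedSum h fun i => ρ (y i) := by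
  simp [QGen, l1norm]

theorem penalty_le_of_corrupt (hρ : ∀ x, 0 ≤ ρ x)
    {est : (Fin n → Fin p → ℝ) → (Fin n → ℝ) → Fin p → ℝ}
    (hest : ∀ X y β, QGen ρ lam h X y (est X y) ≤ QGen ρ lam h X y β)
    {m : ℕ} (hm : m + h ≤ n) {X X' : Fin n → Fin p → ℝ} {y y' : Fin n → ℝ}
    (hZ : Corrupt m X X' y y') :
    h * lam * l1norm (est X' y') ≤ ∑ i, ρ (y i) := by
  obtain ⟨s, hs, hclean⟩ := hZ
  obtain ⟨B, hBs, hB⟩ := exists_subset_card_eq (s := sᶜ) (n := h)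
    (by rw [card_compl, Fintype.card_fin]; omega)
  have hfit : trimmedSum h (fun i => ρ (y' i)) ≤ ∑ i, ρ (y i) :=
    calc trimmedSum h (fun i => ρ (y' i)) ≤ ∑ i ∈ B, ρ (y' i) := trimmedSum_le_sum hB
      _ = ∑ i ∈ B, ρ (y i) :=
        sum_congr rfl fun i hi => by rw [(hclean i (mem_compl.1 (hBs hi))).2]
      _ ≤ ∑ i, ρ (y i) := sum_le_univ_sum_of_nonneg fun i => hρ _
  have hQ := hest X' y' 0
  have hresid_nonneg := trimmedSum_nonneg (h := h) fun i => hρ (y' i - ∑ j, X' i j * est X' y' j)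
  rw [QGen_zero] at hQ
  unfold QGen at hQ
  linarith

theorem not_breaksDown_of_add_le (hρ : ∀ x, 0 ≤ ρ x)
    {est : (Fin n → Fin p → ℝ) → (Fin n → ℝ) → Fin p → ℝ}
    (hest : ∀ X y β, QGen ρ lam h X y (est X y) ≤ QGen ρ lam h X y β)
    (hh : 0 < h) (hlam : 0 < lam) (X : Fin n → Fin p → ℝ) (y : Fin n → ℝ)
    {m : ℕ} (hm : m + h ≤ n) : ¬ BreaksDown est X y m := by
  intro hbd
  have hhlam : 0 < h * lam := by positivity
  obtain ⟨X', y', hZ, hM⟩ := hbd ((∑ i, ρ (y i)) / (h * lam))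
  rw [div_lt_iff₀' hhlam] at hM
  have := mul_le_mul_of_nonneg_left (euclNorm_le_l1norm (est X' y')) hhlam.le
  linarith [penalty_le_of_corrupt hρ hest hm hZ]

/-- The sample `(X, y)` with the observations in `s` replaced by `(c eⱼ₀, c b)`: these all lie
on the hyperplane `y = x' (b eⱼ₀)`, and a large `c` makes them costly to leave. -/
def plantedX (s : Finset (Fin n)) (j₀ : Fin p) (c : ℝ) (X : Fin n → Fin p → ℝ) :
    Fin n → Fin p → ℝ :=
  fun i => if i ∈ s then Pi.single j₀ c else X i

def plantedY (s : Finset (Fin n)) (c b : ℝ) (y : Fin n → ℝ) : Fin n → ℝ :=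
  fun i => if i ∈ s then c * b else y i

variable {s : Finset (Fin n)} {j₀ : Fin p} {b c : ℝ} {X : Fin n → Fin p → ℝ} {y : Fin n → ℝ}

theorem corrupt_planted : Corrupt #s X (plantedX s j₀ c X) y (plantedY s c b y) :=
  ⟨s, le_rfl, fun i hi => ⟨fun j => by simp [plantedX, hi], by simp [plantedY, hi]⟩⟩

theorem residual_planted_of_mem {i : Fin n} (hi : i ∈ s) (β : Fin p → ℝ) :
    plantedY s c b y i - ∑ j, plantedX s j₀ c X i j * β j = c * (b - β j₀) := by
  simp [plantedX, plantedY, hi, Pi.single_apply, mul_sub]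

theorem residual_planted_of_notMem {i : Fin n} (hi : i ∉ s) (β : Fin p → ℝ) :
    plantedY s c b y i - ∑ j, plantedX s j₀ c X i j * β j = y i - ∑ j, X i j * β j := by
  simp [plantedX, plantedY, hi]

theorem QGen_planted_le (hρ : ∀ x, 0 ≤ ρ x) (hρ0 : ρ 0 = 0) (hh : h ≤ n) (hs : #sᶜ + 1 = h)
    {β : Fin p → ℝ} (hβ : β j₀ = b) :
    QGen ρ lam h (plantedX s j₀ c X) (plantedY s c b y) β ≤
      ∑ i, ρ (y i - ∑ j, X i j * β j) + h * lam * l1norm β := by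
  obtain ⟨i₀, -, hi₀⟩ := exists_mem_notMem_of_card_lt_card (s := sᶜ) (t := univ)
    (by rw [card_univ, Fintype.card_fin]; omega)
  have hfit : trimmedSum h (fun i => ρ (plantedY s c b y i - ∑ j, plantedX s j₀ c X i j * β j))
      ≤ ∑ i, ρ (y i - ∑ j, X i j * β j) :=
    calc _ ≤ ∑ i ∈ insert i₀ sᶜ, ρ (plantedY s c b y i - ∑ j, plantedX s j₀ c X i j * β j) :=
          trimmedSum_le_sum (by rw [card_insert_of_notMem hi₀, hs])
      _ = ∑ i ∈ sᶜ, ρ (y i - ∑ j, X i j * β j) := by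
          rw [sum_insert hi₀, residual_planted_of_mem (by simpa using hi₀), hβ, sub_self,
            mul_zero, hρ0, zero_add]
          exact sum_congr rfl fun i hi => by rw [residual_planted_of_notMem (mem_compl.1 hi)]
      _ ≤ ∑ i, ρ (y i - ∑ j, X i j * β j) := sum_le_univ_sum_of_nonneg fun i => hρ _
  unfold QGen
  linarith

theorem le_QGen_planted (hρ : ∀ x, 0 ≤ ρ x) (hgrowth : ∀ x, 1 ≤ |x| → |x| * ρ 1 ≤ ρ x)
    (hlam : 0 ≤ lam) (hh : h ≤ n) (hs : #sᶜ < h) (hc : 1 ≤ c) {β : Fin p → ℝ}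
    (hβ : 1 ≤ |b - β j₀|) :
    c * ρ 1 ≤ QGen ρ lam h (plantedX s j₀ c X) (plantedY s c b y) β := by
  have hres : ∀ i ∈ s, c * ρ 1 ≤
      ρ (plantedY s c b y i - ∑ j, plantedX s j₀ c X i j * β j) := by
    intro i hi
    have hcb : c ≤ |c * (b - β j₀)| := by
      rw [abs_mul, abs_of_nonneg (zero_le_one.trans hc)]
      nlinarith
    rw [residual_planted_of_mem hi]
    calc c * ρ 1 ≤ |c * (b - β j₀)| * ρ 1 := mul_le_mul_of_nonneg_right hcb (hρ 1)
      _ ≤ _ := hgrowth _ (hc.trans hcb)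
  have hpen : 0 ≤ h * lam * l1norm β :=
    mul_nonneg (by positivity) (sum_nonneg fun j _ => abs_nonneg (β j))
  unfold QGen
  linarith [le_trimmedSum (fun i => hρ _) hh hs hres]

end Estimator

theorem breaksDown_sub_add_one {n p h : ℕ} {ρ : ℝ → ℝ} {lam : ℝ} (j₀ : Fin p) (hh : 0 < h)
    (hhn : h ≤ n) (hρ : ∀ x, 0 ≤ ρ x) (hρ0 : ρ 0 = 0) (hρ1 : 0 < ρ 1)
    (hgrowth : ∀ x, 1 ≤ |x| → |x| * ρ 1 ≤ ρ x) (hlam : 0 ≤ lam)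
    {est : (Fin n → Fin p → ℝ) → (Fin n → ℝ) → Fin p → ℝ}
    (hest : ∀ X y β, QGen ρ lam h X y (est X y) ≤ QGen ρ lam h X y β)
    (X : Fin n → Fin p → ℝ) (y : Fin n → ℝ) : BreaksDown est X y (n - h + 1) := by
  intro M
  obtain ⟨s, -, hs⟩ := exists_subset_card_eq (s := (univ : Finset (Fin n))) (n := n - h + 1)
    (by rw [card_univ, Fintype.card_fin]; omega)
  have hsc : #sᶜ + 1 = h := by rw [card_compl, Fintype.card_fin, hs]; omega
  set b := max M 0 + 1
  set β₀ : Fin p → ℝ := Pi.single j₀ b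
  set C := ∑ i, ρ (y i - ∑ j, X i j * β₀ j) + h * lam * l1norm β₀
  set c := max 1 ((C + 1) / ρ 1)
  refine ⟨plantedX s j₀ c X, plantedY s c b y, hs ▸ corrupt_planted, ?_⟩
  by_contra! hM
  have hfar : 1 ≤ |b - est (plantedX s j₀ c X) (plantedY s c b y) j₀| := by
    have := (abs_le.1 ((abs_le_euclNorm _ j₀).trans hM)).2
    exact le_abs.2 (Or.inl (by linarith [le_max_left M 0]))
  have hC : C < c * ρ 1 := by
    have := (div_le_iff₀ hρ1).1 (le_max_right 1 ((C + 1) / ρ 1))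
    linarith
  have hsandwich : c * ρ 1 ≤ C :=
    calc c * ρ 1 ≤ QGen ρ lam h (plantedX s j₀ c X) (plantedY s c b y) (est _ _) :=
          le_QGen_planted hρ hgrowth hlam hhn (by omega) (le_max_left _ _) hfar
      _ ≤ QGen ρ lam h (plantedX s j₀ c X) (plantedY s c b y) β₀ := hest _ _ _
      _ ≤ C := QGen_planted_le hρ hρ0 hhn hsc (by simp [β₀])
  linarith

theorem breakdownPoint_eq_of_breaksDown {n p : ℕ}
    {est : (Fin n → Fin p → ℝ) → (Fin n → ℝ) → Fin p → ℝ} {X : Fin n → Fin p → ℝ}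
    {y : Fin n → ℝ} {k : ℕ} (hk : BreaksDown est X y k)
    (hlt : ∀ m < k, ¬ BreaksDown est X y m) : breakdownPoint est X y = k / n := by
  have hinf : sInf {m | BreaksDown est X y m} = k :=
    (Nat.sInf_le hk).antisymm (le_csInf ⟨k, hk⟩ fun m hm => not_lt.1 fun h => hlt m h hm)
  rw [breakdownPoint, hinf]

/-- Theorem 1 of the paper: for a convex, symmetric loss `ρ` with `ρ(0) = 0` and `ρ(x) > 0`
for `x ≠ 0`, penalty parameter `λ > 0` and subset size `1 ≤ h ≤ n`, any estimator `est`
that, for every sample, minimizes the trimmed penalized objective `QGen ρ λ h` has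
replacement finite-sample breakdown point `(n − h + 1)/n` at every sample `Z = (X, y)`. -/
theorem breakdown_point_trimmed_penalized
    {n p h : ℕ} (hp : 1 ≤ p) (hh1 : 1 ≤ h) (hhn : h ≤ n)
    (ρ : ℝ → ℝ) (hconv : ConvexOn ℝ Set.univ ρ) (hsym : ∀ x : ℝ, ρ (-x) = ρ x)
    (hzero : ρ 0 = 0) (hpos : ∀ x : ℝ, x ≠ 0 → 0 < ρ x)
    (lam : ℝ) (hlam : 0 < lam)
    (est : (Fin n → Fin p → ℝ) → (Fin n → ℝ) → Fin p → ℝ)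
    (hest : ∀ (X : Fin n → Fin p → ℝ) (y : Fin n → ℝ) (β : Fin p → ℝ),
      QGen ρ lam h X y (est X y) ≤ QGen ρ lam h X y β)
    (X : Fin n → Fin p → ℝ) (y : Fin n → ℝ) :
    breakdownPoint est X y = ((n : ℝ) - h + 1) / n := by
  have hρ := hconv.nonneg_of_even hsym hzero
  rw [breakdownPoint_eq_of_breaksDown
    (breaksDown_sub_add_one ⟨0, hp⟩ hh1 hhn hρ hzero (hpos 1 one_ne_zero)
      (fun _ => hconv.abs_mul_map_one_le hsym hzero) hlam.le hest X y)
    fun m hm => not_breaksDown_of_add_le hρ hest hh1 hlam X y (by omega)]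
  push_cast [Nat.cast_sub hhn]
  ring
end

section
/- Let ρ: ℝ → ℝ be convex, symmetric, with ρ(0) = 0 and ρ(x) > 0 for x ≠ 0, let λ > 0 and 1 ≤ h ≤ n. Let Z = (X, y) be a sample with M_y = max_{1≤i≤n} |y_i| and M_{x₁} = max_{1≤i≤n} |x_{i1}|. Fix γ > 0 and τ > 0, and let Z̃ = Z_{γ,τ} be obtained from Z by replacing the last m = n − h + 1 observations by the point z(γ, τ) = ((τ, 0, …, 0)', γτ). Then for β_γ = (γ, 0, …, 0)' ∈ ℝ^p, the objective Q_{Z̃}(β) = Σ_{i=1}^{h} (ρ(ỹ − X̃β))_{i:n} + h λ Σ_{j=1}^{p} |β_j| satisfies Q_{Z̃}(β_γ) ≤ max(h − m, 0)·ρ(M_y + γ M_{x₁}) + h λ γ. -/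
/-! At `β_γ` each replaced observation has residual `γτ − τγ = 0`, so at least `n − h + 1` of
the losses vanish and at most `max(h − m, 0)` of the `h` smallest ones can be positive. Every
other loss is `ρ` of a residual of absolute value at most `M_y + γ M_{x₁}`, and an even convex
function is nondecreasing in `|x|`. -/

open Finset

/-- The design matrix obtained from `X` by replacing the last `n − h + 1` observations
(indices `i ≥ h − 1`) by the predictor vector `x(τ) = (τ, 0, …, 0)'`. -/
noncomputable def contamX {n p : ℕ} (h : ℕ) (X : Fin n → Fin p → ℝ) (τ : ℝ) :
    Fin n → Fin p → ℝ :=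
  fun i j => if (i : ℕ) < h - 1 then X i j else if (j : ℕ) = 0 then τ else 0

/-- The response vector obtained from `y` by replacing the last `n − h + 1` observations
(indices `i ≥ h − 1`) by the response `y(γ, τ) = γτ`. -/
noncomputable def contamY {n : ℕ} (h : ℕ) (y : Fin n → ℝ) (γ τ : ℝ) : Fin n → ℝ :=
  fun i => if (i : ℕ) < h - 1 then y i else γ * τ

lemma ConvexOn.le_of_abs_le_of_even {f : ℝ → ℝ} (hf : ConvexOn ℝ Set.univ f)
    (heven : ∀ x, f (-x) = f x) {a b : ℝ} (hab : |a| ≤ |b|) : f a ≤ f b := by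
  have hmem : a ∈ segment ℝ (-|b|) |b| := by
    rw [segment_eq_Icc (neg_le_self (abs_nonneg b))]
    exact abs_le.1 hab
  calc f a ≤ max (f (-|b|)) (f |b|) := hf.le_on_segment trivial trivial hmem
    _ = f b := by
      rw [heven, max_self]
      rcases abs_choice b with hb | hb <;> rw [hb]
      exact heven b

section OrderStatistics

variable {n : ℕ} (r : Fin n → ℝ)

lemma orderStat_le_of_lt_card {s : Finset (Fin n)} {c : ℝ} (hs : ∀ i ∈ s, r i ≤ c) {k : Fin n}
    (hk : (k : ℕ) < s.card) : orderStat r k ≤ c := by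
  by_contra! hck
  have hmaps : Set.MapsTo (Tuple.sort r).symm s (Iio k) := by
    intro i hi
    rw [coe_Iio, Set.mem_Iio]
    by_contra! hki
    have hmono : orderStat r k ≤ r i := by simpa [orderStat] using Tuple.monotone_sort r hki
    exact (hs i hi).not_gt (hck.trans_le hmono)
  have hcard := card_le_card_of_injOn _ hmaps (Tuple.sort r).symm.injective.injOn
  rw [Fin.card_Iio] at hcard
  omega

lemma card_filter_lt_and_not_lt_le (a h : ℕ) :
    #{i : Fin n | (i : ℕ) < h ∧ ¬ (i : ℕ) < a} ≤ h - a := by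
  calc #{i : Fin n | (i : ℕ) < h ∧ ¬ (i : ℕ) < a} ≤ #(Ico a h) := by
        refine card_le_card_of_injOn Fin.val (fun i hi => ?_) Fin.val_injective.injOn
        simp only [coe_filter, mem_univ, true_and, Set.mem_ofPred_eq] at hi
        simp only [coe_Ico, Set.mem_Ico]
        omega
    _ = h - a := Nat.card_Ico a h

lemma trimmedSum_le_of_nonpos_on {h : ℕ} {s : Finset (Fin n)} {B : ℝ} (hB0 : 0 ≤ B)
    (hB : ∀ i, r i ≤ B) (hs : ∀ i ∈ s, r i ≤ 0) :
    trimmedSum h r ≤ (h - s.card : ℕ) * B := by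
  calc trimmedSum h r
      ≤ ∑ i ∈ univ.filter (fun i : Fin n => (i : ℕ) < h),
          if (i : ℕ) < s.card then 0 else B := by
        refine sum_le_sum fun i _ => ?_
        split_ifs with hi
        · exact orderStat_le_of_lt_card r hs hi
        · exact hB _
    _ = #{i : Fin n | (i : ℕ) < h ∧ ¬ (i : ℕ) < s.card} * B := by
        rw [sum_ite, sum_const_zero, zero_add, sum_const, nsmul_eq_mul, filter_filter]
    _ ≤ (h - s.card : ℕ) * B := by
        gcongr
        exact card_filter_lt_and_not_lt_le _ _

end OrderStatistics

lemma card_filter_not_val_lt (n m : ℕ) : #{i : Fin n | ¬ (i : ℕ) < m} = n - m := by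
  rw [← card_image_of_injective _ Fin.val_injective]
  convert Nat.card_Ico m n
  ext k
  simp only [mem_image, mem_filter, mem_univ, true_and, mem_Ico]
  constructor
  · rintro ⟨i, hi, rfl⟩
    exact ⟨not_lt.1 hi, i.isLt⟩
  · rintro ⟨hmk, hkn⟩
    exact ⟨⟨k, hkn⟩, not_lt.2 hmk, rfl⟩

lemma sum_mul_ite_val_eq_zero {p : ℕ} (hp : 1 ≤ p) (x : Fin p → ℝ) (γ : ℝ) :
    ∑ j, x j * (if (j : ℕ) = 0 then γ else 0) = x ⟨0, hp⟩ * γ := by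
  simp [← Fin.ext_iff (b := ⟨0, hp⟩)]

lemma l1norm_ite_val_eq_zero {p : ℕ} (hp : 1 ≤ p) (γ : ℝ) :
    l1norm (fun j : Fin p => if (j : ℕ) = 0 then γ else 0) = |γ| := by
  simp [l1norm, apply_ite, ← Fin.ext_iff (b := ⟨0, hp⟩)]

lemma contam_residual {n p h : ℕ} (hp : 1 ≤ p) (X : Fin n → Fin p → ℝ) (y : Fin n → ℝ)
    (γ τ : ℝ) (i : Fin n) :
    contamY h y γ τ i - ∑ j, contamX h X τ i j * (if (j : ℕ) = 0 then γ else 0) =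
      if (i : ℕ) < h - 1 then y i - X i ⟨0, hp⟩ * γ else 0 := by
  rw [sum_mul_ite_val_eq_zero hp]
  unfold contamX contamY
  split_ifs <;> simp_all [mul_comm]

lemma abs_sub_mul_le {a b A B γ : ℝ} (ha : |a| ≤ A) (hb : |b| ≤ B) (hγ : 0 ≤ γ) :
    |a - b * γ| ≤ A + γ * B :=
  calc |a - b * γ| ≤ |a| + |b * γ| := abs_sub a (b * γ)
    _ = |a| + |b| * γ := by rw [abs_mul, abs_of_nonneg hγ]
    _ ≤ A + γ * B := by rw [mul_comm γ]; gcongr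

lemma natCast_sub_sub_le_max (n h : ℕ) :
    ((h - (n - (h - 1)) : ℕ) : ℝ) ≤ max ((h : ℝ) - ((n : ℝ) - h + 1)) 0 := by
  rcases (by omega : h - (n - (h - 1)) = 0 ∨ h - (n - (h - 1)) + n + 1 ≤ 2 * h) with h0 | hle
  · simp [h0]
  · have := (Nat.cast_le (α := ℝ)).2 hle
    push_cast at this
    exact le_max_of_le_left (by linarith)

theorem objective_bound_at_beta_gamma_general
    {n p h : ℕ} (hp : 1 ≤ p)
    (ρ : ℝ → ℝ) (hconv : ConvexOn ℝ Set.univ ρ) (hsym : ∀ x : ℝ, ρ (-x) = ρ x)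
    (hzero : ρ 0 = 0)
    (lam : ℝ)
    (X : Fin n → Fin p → ℝ) (y : Fin n → ℝ)
    (My Mx1 : ℝ)
    (hMy : IsGreatest (Set.range fun i : Fin n => |y i|) My)
    (hMx1 : IsGreatest (Set.range fun i : Fin n => |X i ⟨0, hp⟩|) Mx1)
    (γ τ : ℝ) (hγ : 0 < γ) :
    QGen ρ lam h (contamX h X τ) (contamY h y γ τ)
        (fun j : Fin p => if (j : ℕ) = 0 then γ else 0) ≤
      max ((h : ℝ) - ((n : ℝ) - h + 1)) 0 * ρ (My + γ * Mx1) + (h : ℝ) * lam * γ := by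
  have hρB : 0 ≤ ρ (My + γ * Mx1) :=
    hzero ▸ hconv.le_of_abs_le_of_even hsym (by rw [abs_zero]; positivity)
  set r : Fin n → ℝ := fun i =>
    ρ (contamY h y γ τ i - ∑ j, contamX h X τ i j * (if (j : ℕ) = 0 then γ else 0))
  have hr_le (i : Fin n) : r i ≤ ρ (My + γ * Mx1) := by
    simp only [r, contam_residual hp]
    refine hconv.le_of_abs_le_of_even hsym ?_
    split_ifs
    · exact (abs_sub_mul_le (hMy.2 ⟨i, rfl⟩) (hMx1.2 ⟨i, rfl⟩) hγ.le).trans (le_abs_self _)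
    · simp
  have hr_replaced : ∀ i ∈ ({i : Fin n | ¬ (i : ℕ) < h - 1} : Finset (Fin n)), r i ≤ 0 :=
    fun i hi => by simp only [r, contam_residual hp, if_neg (mem_filter.1 hi).2, hzero, le_refl]
  have hbound := trimmedSum_le_of_nonpos_on r (h := h) hρB hr_le hr_replaced
  rw [card_filter_not_val_lt] at hbound
  rw [QGen, l1norm_ite_val_eq_zero hp, abs_of_pos hγ]
  gcongr ?_ + _
  exact hbound.trans (mul_le_mul_of_nonneg_right (natCast_sub_sub_le_max n h) hρB)

/-- Inequality (A.2) of the paper: with `M_y = max_i |yᵢ|`, `M_{x₁} = max_i |x_{i1}|`, and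
`Z̃ = Z_{γ,τ}` obtained from `Z` by replacing the last `m = n − h + 1` observations by
`z(γ, τ) = ((τ, 0, …, 0)', γτ)`, the trimmed penalized objective at `β_γ = (γ, 0, …, 0)'`
satisfies `Q_Z̃(β_γ) ≤ max(h − m, 0)·ρ(M_y + γ M_{x₁}) + h λ γ`. -/
theorem objective_bound_at_beta_gamma
    {n p h : ℕ} (hp : 1 ≤ p) (hh1 : 1 ≤ h) (hhn : h ≤ n)
    (ρ : ℝ → ℝ) (hconv : ConvexOn ℝ Set.univ ρ) (hsym : ∀ x : ℝ, ρ (-x) = ρ x)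
    (hzero : ρ 0 = 0) (hpos : ∀ x : ℝ, x ≠ 0 → 0 < ρ x)
    (lam : ℝ) (hlam : 0 < lam)
    (X : Fin n → Fin p → ℝ) (y : Fin n → ℝ)
    (My Mx1 : ℝ)
    (hMy : IsGreatest (Set.range fun i : Fin n => |y i|) My)
    (hMx1 : IsGreatest (Set.range fun i : Fin n => |X i ⟨0, hp⟩|) Mx1)
    (γ τ : ℝ) (hγ : 0 < γ) (hτ : 0 < τ) :
    QGen ρ lam h (contamX h X τ) (contamY h y γ τ)
        (fun j : Fin p => if (j : ℕ) = 0 then γ else 0) ≤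
      max ((h : ℝ) - ((n : ℝ) - h + 1)) 0 * ρ (My + γ * Mx1) + (h : ℝ) * lam * γ :=
  objective_bound_at_beta_gamma_general hp ρ hconv hsym hzero lam X y My Mx1 hMy hMx1 γ τ hγ
end

section
/- Fix λ > 0, a sample Z = (X, y) with X ∈ ℝ^{n×p} and y ∈ ℝ^n, and a subset size 1 ≤ h ≤ n. For a subset H ⊆ {1, …, n} with |H| = h, define Q(H, β) = Σ_{i∈H} (y_i − x_i'β)² + h λ Σ_{j=1}^{p} |β_j|, and let β̂_H be a minimizer of β ↦ Q(H, β). Given a current subset H_k with |H_k| = h, let H_{k+1} be a set of indices of the h smallest squared residuals r_{k,i}² = (y_i − x_i'β̂_{H_k})², i.e., H_{k+1} = { i : r_{k,i}² ∈ { (r_k²)_{j:n} : j = 1, …, h } } (with ties broken so that |H_{k+1}| = h). Then Q(H_{k+1}, β̂_{H_{k+1}}) ≤ Q(H_{k+1}, β̂_{H_k}) ≤ Q(H_k, β̂_{H_k}); that is, each concentration step (C-step) does not increase the sparse LTS objective. -/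
open Finset

/-- The L¹-penalized residual sum of squares on a subsample `H`:
`Q(H, β) = Σ_{i∈H} (yᵢ − xᵢ'β)² + h λ Σ_j |β_j|`. -/
noncomputable def QSub {n p : ℕ} (lam : ℝ) (h : ℕ)
    (X : Fin n → Fin p → ℝ) (y : Fin n → ℝ) (H : Finset (Fin n)) (β : Fin p → ℝ) : ℝ :=
  ∑ i ∈ H, (y i - ∑ j, X i j * β j) ^ 2 + (h : ℝ) * lam * l1norm β

namespace Finset

variable {ι M : Type*} [AddCommMonoid M] [PartialOrder M] {s t : Finset ι} {f : ι → M}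

lemma sum_le_sum_of_card_eq_of_forall_le_s10 [IsOrderedAddMonoid M] (hcard : #s = #t)
    (hf : ∀ i ∈ s, ∀ j ∈ t, f i ≤ f j) : ∑ i ∈ s, f i ≤ ∑ j ∈ t, f j := by
  let e : s ≃ t := equivOfCardEq hcard
  calc ∑ i ∈ s, f i = ∑ i : s, f i := (sum_coe_sort s f).symm
    _ ≤ ∑ i : s, f (e i) := sum_le_sum fun i _ ↦ hf i i.2 (e i) (e i).2
    _ = ∑ j : t, f j := e.sum_comp fun j ↦ f j
    _ = ∑ j ∈ t, f j := sum_coe_sort t f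

lemma sum_le_sum_of_card_eq_of_forall_le_of_notMem [IsOrderedCancelAddMonoid M] [DecidableEq ι]
    (hcard : #s = #t) (hf : ∀ i ∈ s, ∀ j ∉ s, f i ≤ f j) :
    ∑ i ∈ s, f i ≤ ∑ j ∈ t, f j :=
  sum_sdiff_le_sum_sdiff.1 <| sum_le_sum_of_card_eq_of_forall_le_s10 (card_sdiff_comm hcard)
    fun i hi j hj ↦ hf i (mem_sdiff.1 hi).1 j (mem_sdiff.1 hj).2

end Finset

theorem cstep_decreases_objective_general
    {n p h : ℕ} (lam : ℝ)
    (X : Fin n → Fin p → ℝ) (y : Fin n → ℝ)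
    (Hk Hk1 : Finset (Fin n)) (hHk : Hk.card = h) (hHk1 : Hk1.card = h)
    (βk βk1 : Fin p → ℝ)
    (hβk1 : ∀ β : Fin p → ℝ, QSub lam h X y Hk1 βk1 ≤ QSub lam h X y Hk1 β)
    (hstep : ∀ i ∈ Hk1, ∀ i' ∉ Hk1,
      (y i - ∑ j, X i j * βk j) ^ 2 ≤ (y i' - ∑ j, X i' j * βk j) ^ 2) :
    QSub lam h X y Hk1 βk1 ≤ QSub lam h X y Hk1 βk ∧
      QSub lam h X y Hk1 βk ≤ QSub lam h X y Hk βk := by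
  refine ⟨hβk1 βk, ?_⟩
  have hresiduals : ∑ i ∈ Hk1, (y i - ∑ j, X i j * βk j) ^ 2
      ≤ ∑ i ∈ Hk, (y i - ∑ j, X i j * βk j) ^ 2 :=
    sum_le_sum_of_card_eq_of_forall_le_of_notMem (hHk1.trans hHk.symm) hstep
  unfold QSub
  exact add_le_add_left hresiduals _

/-- A concentration step (C-step) does not increase the sparse LTS objective: if `β̂_{H_k}`
minimizes `Q(H_k, ·)`, `H_{k+1}` consists of indices of the `h` smallest squared residuals
with respect to `β̂_{H_k}` (with `|H_{k+1}| = h`), and `β̂_{H_{k+1}}` minimizes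
`Q(H_{k+1}, ·)`, then
`Q(H_{k+1}, β̂_{H_{k+1}}) ≤ Q(H_{k+1}, β̂_{H_k}) ≤ Q(H_k, β̂_{H_k})`. -/
theorem cstep_decreases_objective
    {n p h : ℕ} (lam : ℝ) (hlam : 0 < lam)
    (X : Fin n → Fin p → ℝ) (y : Fin n → ℝ)
    (Hk Hk1 : Finset (Fin n)) (hHk : Hk.card = h) (hHk1 : Hk1.card = h)
    (βk βk1 : Fin p → ℝ)
    (hβk : ∀ β : Fin p → ℝ, QSub lam h X y Hk βk ≤ QSub lam h X y Hk β)
    (hβk1 : ∀ β : Fin p → ℝ, QSub lam h X y Hk1 βk1 ≤ QSub lam h X y Hk1 β)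
    (hstep : ∀ i ∈ Hk1, ∀ i' ∉ Hk1,
      (y i - ∑ j, X i j * βk j) ^ 2 ≤ (y i' - ∑ j, X i' j * βk j) ^ 2) :
    QSub lam h X y Hk1 βk1 ≤ QSub lam h X y Hk1 βk ∧
      QSub lam h X y Hk1 βk ≤ QSub lam h X y Hk βk :=
  cstep_decreases_objective_general lam X y Hk Hk1 hHk hHk1 βk βk1 hβk1 hstep
end

section
/- Fix λ > 0, a sample Z = (X, y), and 1 ≤ h ≤ n. For H ⊆ {1, …, n} with |H| = h let Q(H, β) = Σ_{i∈H} (y_i − x_i'β)² + h λ Σ_{j=1}^{p} |β_j| and let β̂_H be a minimizer of Q(H, ·). Consider any sequence of subsets H₀, H₁, H₂, … generated by C-steps, i.e., H_{k+1} is a set of indices of the h smallest squared residuals with respect to β̂_{H_k}. Then the sequence of objective values Q(H_k, β̂_{H_k}) is nonincreasing, and since there are only finitely many subsets of size h, the objective values converge after finitely many steps; in particular there exists K such that Q(H_k, β̂_{H_k}) = Q(H_K, β̂_{H_K}) for all k ≥ K. -/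
open Finset

/-!
A C-step first trades `H_k` for `H_{k+1}` at the fixed coefficient `β̂_{H_k}`, which cannot
increase `Q` because `H_{k+1}` collects `h` smallest squared residuals, and then re-minimises
over `β`. So the values are antitone; each is the minimum of `Q(H_k, ·)`, a function of the
`h`-subset `H_k` alone, so they take finitely many values and must eventually be constant.
-/

theorem Finset.sum_le_sum_of_card_eq_of_forall_mem_le_notMem {ι M : Type*} [DecidableEq ι]
    [AddCommMonoid M] [LinearOrder M] [IsOrderedAddMonoid M] {f : ι → M} {s t : Finset ι}
    (hst : #s = #t) (hf : ∀ i ∈ s, ∀ j ∉ s, f i ≤ f j) :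
    ∑ i ∈ s, f i ≤ ∑ i ∈ t, f i := by
  have hcard : #(s \ t) = #(t \ s) := card_sdiff_comm hst
  obtain ⟨c, hs_le, le_ht⟩ : ∃ c, (∀ i ∈ s \ t, f i ≤ c) ∧ ∀ j ∈ t \ s, c ≤ f j := by
    rcases (t \ s).eq_empty_or_nonempty with hts | hts
    · have hst' : s \ t = ∅ := card_eq_zero.mp (by rw [hcard, hts, card_empty])
      exact ⟨0, by simp [hst'], by simp [hts]⟩
    · obtain ⟨j, hj, hj_min⟩ := exists_min_image (t \ s) f hts
      exact ⟨f j, fun i hi => hf i (mem_sdiff.mp hi).1 j (mem_sdiff.mp hj).2, hj_min⟩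
  calc ∑ i ∈ s, f i = ∑ i ∈ s ∩ t, f i + ∑ i ∈ s \ t, f i := (sum_inter_add_sum_sdiff s t f).symm
    _ ≤ ∑ i ∈ s ∩ t, f i + #(s \ t) • c := by grw [sum_le_card_nsmul _ _ _ hs_le]
    _ = ∑ i ∈ t ∩ s, f i + #(t \ s) • c := by rw [inter_comm, hcard]
    _ ≤ ∑ i ∈ t ∩ s, f i + ∑ i ∈ t \ s, f i := by grw [card_nsmul_le_sum _ _ _ le_ht]
    _ = ∑ i ∈ t, f i := sum_inter_add_sum_sdiff t s f

theorem Antitone.exists_forall_ge_eq_of_finite_range {ι α : Type*} [Preorder ι] [Nonempty ι]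
    [LinearOrder α] {q : ι → α} (hq : Antitone q) (hfin : (Set.range q).Finite) :
    ∃ K, ∀ k, K ≤ k → q k = q K := by
  obtain ⟨_, ⟨K, rfl⟩, hK⟩ := Set.exists_min_image _ id hfin (Set.range_nonempty q)
  exact ⟨K, fun k hk => le_antisymm (hq hk) (hK _ ⟨k, rfl⟩)⟩

theorem QSub_le_of_forall_mem_sq_residual_le {n p : ℕ} {lam : ℝ} {h : ℕ}
    {X : Fin n → Fin p → ℝ} {y : Fin n → ℝ} {H H' : Finset (Fin n)} {β : Fin p → ℝ}
    (hcard : #H' = #H)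
    (hsmall : ∀ i ∈ H', ∀ i' ∉ H',
      (y i - ∑ j, X i j * β j) ^ 2 ≤ (y i' - ∑ j, X i' j * β j) ^ 2) :
    QSub lam h X y H' β ≤ QSub lam h X y H β := by
  unfold QSub
  grw [sum_le_sum_of_card_eq_of_forall_mem_le_notMem hcard hsmall]

theorem QSub_eq_iInf_of_forall_le {n p : ℕ} {lam : ℝ} {h : ℕ}
    {X : Fin n → Fin p → ℝ} {y : Fin n → ℝ} {H : Finset (Fin n)} {β₀ : Fin p → ℝ}
    (hmin : ∀ β, QSub lam h X y H β₀ ≤ QSub lam h X y H β) :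
    QSub lam h X y H β₀ = ⨅ β, QSub lam h X y H β :=
  le_antisymm (le_ciInf hmin) (ciInf_le ⟨_, Set.forall_mem_range.mpr hmin⟩ β₀)

theorem csteps_converge_finitely_general
    {n p h : ℕ} (lam : ℝ)
    (X : Fin n → Fin p → ℝ) (y : Fin n → ℝ)
    (H : ℕ → Finset (Fin n)) (βhat : ℕ → Fin p → ℝ)
    (hcard : ∀ k, (H k).card = h)
    (hmin : ∀ k, ∀ β : Fin p → ℝ, QSub lam h X y (H k) (βhat k) ≤ QSub lam h X y (H k) β)
    (hstep : ∀ k, ∀ i ∈ H (k + 1), ∀ i' ∉ H (k + 1),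
      (y i - ∑ j, X i j * βhat k j) ^ 2 ≤ (y i' - ∑ j, X i' j * βhat k j) ^ 2) :
    (∀ k, QSub lam h X y (H (k + 1)) (βhat (k + 1)) ≤ QSub lam h X y (H k) (βhat k)) ∧
      ∃ K : ℕ, ∀ k : ℕ, K ≤ k →
        QSub lam h X y (H k) (βhat k) = QSub lam h X y (H K) (βhat K) := by
  have hmono : ∀ k, QSub lam h X y (H (k + 1)) (βhat (k + 1)) ≤ QSub lam h X y (H k) (βhat k) :=
    fun k => (hmin (k + 1) (βhat k)).trans <|
      QSub_le_of_forall_mem_sq_residual_le (by rw [hcard, hcard]) (hstep k)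
  have hrange : (Set.range fun k => QSub lam h X y (H k) (βhat k)).Finite := by
    refine (Set.finite_range fun S => ⨅ β, QSub lam h X y S β).subset ?_
    rintro _ ⟨k, rfl⟩
    exact ⟨H k, (QSub_eq_iInf_of_forall_le (hmin k)).symm⟩
  exact ⟨hmono, (antitone_nat_of_succ_le hmono).exists_forall_ge_eq_of_finite_range hrange⟩

/-- Along any sequence of subsets `H₀, H₁, …` generated by C-steps (each `H_{k+1}` consists
of indices of the `h` smallest squared residuals with respect to a minimizer `β̂_{H_k}` of
`Q(H_k, ·)`), the objective values `Q(H_k, β̂_{H_k})` are nonincreasing, and since there are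
only finitely many subsets of size `h`, they converge after finitely many steps: there is
`K` such that `Q(H_k, β̂_{H_k}) = Q(H_K, β̂_{H_K})` for all `k ≥ K`. -/
theorem csteps_converge_finitely
    {n p h : ℕ} (hh1 : 1 ≤ h) (hhn : h ≤ n) (lam : ℝ) (hlam : 0 < lam)
    (X : Fin n → Fin p → ℝ) (y : Fin n → ℝ)
    (H : ℕ → Finset (Fin n)) (βhat : ℕ → Fin p → ℝ)
    (hcard : ∀ k, (H k).card = h)
    (hmin : ∀ k, ∀ β : Fin p → ℝ, QSub lam h X y (H k) (βhat k) ≤ QSub lam h X y (H k) β)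
    (hstep : ∀ k, ∀ i ∈ H (k + 1), ∀ i' ∉ H (k + 1),
      (y i - ∑ j, X i j * βhat k j) ^ 2 ≤ (y i' - ∑ j, X i' j * βhat k j) ^ 2) :
    (∀ k, QSub lam h X y (H (k + 1)) (βhat (k + 1)) ≤ QSub lam h X y (H k) (βhat k)) ∧
      ∃ K : ℕ, ∀ k : ℕ, K ≤ k →
        QSub lam h X y (H k) (βhat k) = QSub lam h X y (H K) (βhat K) :=
  csteps_converge_finitely_general lam X y H βhat hcard hmin hstep
end
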